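/- (Complex/unitary case, noiseless.) Suppose G is connected and 2p ≥ 3r. Then every second-order critical point Y of the complex rank-p problem min{Re tr(L̂ (Y Y*)*) : Y feasible} with noiseless cost matrix L̂ = L_Z satisfies Y Y* = Z Z*. -/

import Mathlib

open Matrix MeasureTheory ProbabilityTheory
open scoped Kronecker BigOperators ComplexOrder

namespace SyncPaper

variable {α : Type*}

/-- The `i`-th `r × p` row-block of a block matrix `Y ∈ α^{rn × p}`. -/
def blk {n r p : ℕ} (Y : Matrix (Fin n × Fin r) (Fin p) α) (i : Fin n) :
    Matrix (Fin r) (Fin p) α :=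
  Matrix.of fun a b => Y (i, a) b

/-- `Y` is feasible for the complex problem: every `r × p` row-block satisfies `Y_i Y_i* = I_r`. -/
def FeasibleC {n r p : ℕ} (Y : Matrix (Fin n × Fin r) (Fin p) ℂ) : Prop :=
  ∀ i, blk Y i * (blk Y i)ᴴ = 1

/-- Hermitian block-diagonal projection: keeps the Hermitian part of each `r × r`
diagonal block and zeroes out all off-diagonal blocks. -/
noncomputable def SBDC {n r : ℕ} (M : Matrix (Fin n × Fin r) (Fin n × Fin r) ℂ) :
    Matrix (Fin n × Fin r) (Fin n × Fin r) ℂ :=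
  Matrix.of fun q q' => if q.1 = q'.1 then (M q q' + star (M q' q)) / 2 else 0

/-- The matrix `S(Y) = L̂ − SBD(L̂ Y Y*)`. -/
noncomputable def SmatC {n r p : ℕ} (Lhat : Matrix (Fin n × Fin r) (Fin n × Fin r) ℂ)
    (Y : Matrix (Fin n × Fin r) (Fin p) ℂ) :
    Matrix (Fin n × Fin r) (Fin n × Fin r) ℂ :=
  Lhat - SBDC (Lhat * Y * Yᴴ)

/-- Second-order critical point of the complex rank-`p` problem
`min Re tr(L̂ (Y Y*)*)` over feasible `Y`. -/
def IsSecondOrderCriticalC {n r p : ℕ} (Lhat : Matrix (Fin n × Fin r) (Fin n × Fin r) ℂ)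
    (Y : Matrix (Fin n × Fin r) (Fin p) ℂ) : Prop :=
  FeasibleC Y ∧ SmatC Lhat Y * Y = 0 ∧
    ∀ Ydot : Matrix (Fin n × Fin r) (Fin p) ℂ,
      (∀ i, blk Ydot i * (blk Y i)ᴴ + blk Y i * (blk Ydot i)ᴴ = 0) →
      0 ≤ ((SmatC Lhat Y * Ydot * Ydotᴴ).trace).re

/-- The stacked ground truth `Z ∈ ℂ^{rn × r}`. -/
def ZstackC {n r : ℕ} (Zb : Fin n → Matrix (Fin r) (Fin r) ℂ) :
    Matrix (Fin n × Fin r) (Fin r) ℂ :=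
  Matrix.of fun q b => Zb q.1 q.2 b

/-- The block-diagonal matrix `D` with diagonal blocks `Z_1, …, Z_n`. -/
def DmatC {n r : ℕ} (Zb : Fin n → Matrix (Fin r) (Fin r) ℂ) :
    Matrix (Fin n × Fin r) (Fin n × Fin r) ℂ :=
  Matrix.of fun q q' => if q.1 = q'.1 then Zb q.1 q.2 q'.2 else 0

/-- `L_Z = D (L ⊗ I_r) D*`. -/
noncomputable def LZmatC {n r : ℕ} (L : Matrix (Fin n) (Fin n) ℂ) (Zb : Fin n → Matrix (Fin r) (Fin r) ℂ) :
    Matrix (Fin n × Fin r) (Fin n × Fin r) ℂ :=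
  DmatC Zb * (L ⊗ₖ (1 : Matrix (Fin r) (Fin r) ℂ)) * (DmatC Zb)ᴴ

/-- Squared Frobenius norm of a complex matrix. -/
def frobSqC {m m' : Type*} [Fintype m] [Fintype m'] (M : Matrix m m' ℂ) : ℝ :=
  ∑ i, ∑ j, Complex.normSq (M i j)

end SyncPaper

/-!
Write `Y_i = Z_i X_i`, so that feasibility says `X_i X_iᴴ = 1`. For the noiseless cost the second
variation along `Ẏ_i = Z_i V_i` is `∑_{i ~ j} Re tr (X_j X_iᴴ V_i V_iᴴ - V_j V_iᴴ)`: the gauge `Z`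
drops out and only the edges of `G` contribute. Take `V_i = tangentProbe X_i Q`, twice the
orthogonal projection of one common `Q` onto the tangent space at `X_i`, and add up the resulting
inequalities as `Q` runs over the real orthonormal basis `{E_ab, i E_ab}` of `ℂ^{r×p}`. Edge `i ~ j`
then contributes the real part of `(8p - 4r) c - 8pr + 8r² - 2r ‖X_j X_iᴴ‖² - 2c²`, where
`c = tr (X_j X_iᴴ)`. Since `|c|² ≤ r ‖X_j X_iᴴ‖² ≤ r²`, this is at most
`-4 (r - Re c) (2p - 2r - Re c)`, and that is `≤ 0` once `2p ≥ 3r`. As the sum is `≥ 0`, every edge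
term vanishes, which forces `Re c = r`, i.e. `X_i = X_j`. Since `G` is connected, all the `X_i`
are equal, and then `Y Yᴴ = Z Zᴴ`.
-/

namespace SyncPaper

section BlockMatrices

variable {ι m k α : Type*}

def ofBlocks (F : ι → ι → Matrix m m α) : Matrix (ι × m) (ι × m) α :=
  Matrix.of fun q q' => F q.1 q'.1 q.2 q'.2

def ofRowBlocks (V : ι → Matrix m k α) : Matrix (ι × m) k α :=
  Matrix.of fun q b => V q.1 q.2 b

lemma ofBlocks_mul_ofRowBlocks [Fintype ι] [Fintype m] [NonUnitalNonAssocSemiring α]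
    (F : ι → ι → Matrix m m α) (V : ι → Matrix m k α) :
    ofBlocks F * ofRowBlocks V = ofRowBlocks fun i => ∑ j, F i j * V j := by
  ext ⟨i, a⟩ b
  simp [ofBlocks, ofRowBlocks, mul_apply, Fintype.sum_prod_type, Matrix.sum_apply]

lemma ofRowBlocks_mul_conjTranspose [Fintype k] [NonUnitalNonAssocSemiring α] [StarRing α]
    (V U : ι → Matrix m k α) :
    ofRowBlocks V * (ofRowBlocks U)ᴴ = ofBlocks fun i j => V i * (U j)ᴴ := by
  ext ⟨i, a⟩ ⟨j, b⟩
  simp [ofBlocks, ofRowBlocks, mul_apply]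

lemma trace_ofBlocks [Fintype ι] [Fintype m] [AddCommMonoid α] (F : ι → ι → Matrix m m α) :
    (ofBlocks F).trace = ∑ i, (F i i).trace := by
  simp [ofBlocks, trace, Fintype.sum_prod_type]

lemma trace_ofBlocks_mul_ofRowBlocks [Fintype ι] [Fintype m] [Fintype k] [NonUnitalSemiring α]
    [StarRing α] (F : ι → ι → Matrix m m α) (V : ι → Matrix m k α) :
    (ofBlocks F * ofRowBlocks V * (ofRowBlocks V)ᴴ).trace
      = ∑ i, ∑ j, (F i j * (V j * (V i)ᴴ)).trace := by
  simp only [ofBlocks_mul_ofRowBlocks, ofRowBlocks_mul_conjTranspose, trace_ofBlocks,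
    Matrix.sum_mul, trace_sum, Matrix.mul_assoc]

end BlockMatrices

section SecondVariation

variable {n r p : ℕ}

lemma blk_ofRowBlocks (V : Fin n → Matrix (Fin r) (Fin p) ℂ) : blk (ofRowBlocks V) = V := rfl

lemma ofRowBlocks_blk (Y : Matrix (Fin n × Fin r) (Fin p) ℂ) : ofRowBlocks (blk Y) = Y := rfl

lemma SBDC_ofBlocks (F : Fin n → Fin n → Matrix (Fin r) (Fin r) ℂ) :
    SBDC (ofBlocks F) =
      ofBlocks fun i j => if i = j then (2⁻¹ : ℂ) • (F i i + (F i i)ᴴ) else 0 := by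
  ext ⟨i, a⟩ ⟨j, b⟩
  by_cases h : i = j
  · subst h
    simp [SBDC, ofBlocks, div_eq_inv_mul, mul_add]
  · simp [SBDC, ofBlocks, h]

lemma re_trace_hermitianPart_mul {m : Type*} [Fintype m] (N : Matrix m m ℂ) {P : Matrix m m ℂ}
    (hP : Pᴴ = P) : (((2⁻¹ : ℂ) • (N + Nᴴ)) * P).trace.re = (N * P).trace.re := by
  have hstar : (Nᴴ * P).trace = star (N * P).trace := by
    rw [← trace_conjTranspose, conjTranspose_mul, hP, trace_mul_comm]
  rw [smul_mul, add_mul, trace_smul, trace_add, hstar, Complex.star_def, Complex.add_conj,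
    smul_eq_mul, Complex.re_mul_ofReal, Complex.inv_re, Complex.re_ofNat, Complex.normSq_ofNat]
  ring

lemma re_trace_SmatC_mul (Lb : Fin n → Fin n → Matrix (Fin r) (Fin r) ℂ)
    (W V : Fin n → Matrix (Fin r) (Fin p) ℂ) :
    (SmatC (ofBlocks Lb) (ofRowBlocks W) * ofRowBlocks V * (ofRowBlocks V)ᴴ).trace.re
      = ∑ i, ∑ j, (Lb i j * (V j * (V i)ᴴ - W j * (W i)ᴴ * (V i * (V i)ᴴ))).trace.re := by
  have hherm : ∀ i, (V i * (V i)ᴴ)ᴴ = V i * (V i)ᴴ := fun i => by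
    rw [conjTranspose_mul, conjTranspose_conjTranspose]
  rw [SmatC, ofBlocks_mul_ofRowBlocks, ofRowBlocks_mul_conjTranspose, SBDC_ofBlocks,
    Matrix.sub_mul, Matrix.sub_mul, trace_sub, trace_ofBlocks_mul_ofRowBlocks,
    trace_ofBlocks_mul_ofRowBlocks]
  simp only [ite_mul, zero_mul, apply_ite trace, trace_zero, Finset.sum_ite_eq, Finset.mem_univ,
    if_true]
  simp only [Complex.sub_re, Complex.re_sum, re_trace_hermitianPart_mul _ (hherm _),
    Matrix.sum_mul, trace_sum, Matrix.mul_sub, trace_sub, Finset.sum_sub_distrib,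
    Matrix.mul_assoc]

lemma LZmatC_eq_ofBlocks (L : Matrix (Fin n) (Fin n) ℂ) (Zb : Fin n → Matrix (Fin r) (Fin r) ℂ) :
    LZmatC L Zb = ofBlocks fun i j => L i j • (Zb i * (Zb j)ᴴ) := by
  ext ⟨i, a⟩ ⟨j, b⟩
  simp only [LZmatC, DmatC, ofBlocks, mul_apply, of_apply, kroneckerMap_apply, one_apply,
    mul_ite, mul_one, mul_zero, ite_mul, zero_mul, Fintype.sum_prod_type, Finset.sum_ite_eq',
    Finset.mem_univ, if_true, Finset.sum_ite_eq, conjTranspose_apply, Complex.star_def,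
    apply_ite (starRingEnd ℂ), map_zero, Finset.sum_ite_irrel, Finset.sum_const_zero,
    Matrix.smul_apply, smul_eq_mul, Finset.mul_sum]
  exact Finset.sum_congr rfl fun _ _ => by ring

lemma re_trace_SmatC_LZmatC_mul (L : Matrix (Fin n) (Fin n) ℂ)
    {Zb : Fin n → Matrix (Fin r) (Fin r) ℂ} (hZb : ∀ i, (Zb i)ᴴ * Zb i = 1)
    (X V : Fin n → Matrix (Fin r) (Fin p) ℂ) :
    (SmatC (LZmatC L Zb) (ofRowBlocks fun i => Zb i * X i) * ofRowBlocks (fun i => Zb i * V i)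
        * (ofRowBlocks fun i => Zb i * V i)ᴴ).trace.re
      = ∑ i, ∑ j, (L i j * (V j * (V i)ᴴ - X j * (X i)ᴴ * (V i * (V i)ᴴ)).trace).re := by
  have hcancel : ∀ i (M : Matrix (Fin r) (Fin r) ℂ), (Zb i)ᴴ * (Zb i * M) = M := fun i M => by
    rw [← Matrix.mul_assoc, hZb, Matrix.one_mul]
  rw [LZmatC_eq_ofBlocks, re_trace_SmatC_mul]
  refine Finset.sum_congr rfl fun i _ => Finset.sum_congr rfl fun j _ => ?_
  set M := V j * (V i)ᴴ - X j * (X i)ᴴ * (V i * (V i)ᴴ)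
  have hconj : L i j • (Zb i * (Zb j)ᴴ) * ((Zb j * V j) * (Zb i * V i)ᴴ
      - (Zb j * X j) * (Zb i * X i)ᴴ * ((Zb i * V i) * (Zb i * V i)ᴴ))
      = L i j • (Zb i * M * (Zb i)ᴴ) := by
    simp only [M, conjTranspose_mul, Matrix.smul_mul, Matrix.mul_sub, Matrix.sub_mul,
      Matrix.mul_assoc, hcancel, smul_sub]
  rw [hconj, trace_smul, trace_mul_comm, ← Matrix.mul_assoc, hZb, Matrix.one_mul, smul_eq_mul]

end SecondVariation

section Graphs

variable {V : Type*} {G : SimpleGraph V}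

lemma sum_lapMatrix_mul_of_diag_eq_zero {R : Type*} [Fintype V] [DecidableEq V] [Ring R]
    [DecidableRel G.Adj] (t : V → V → R) (ht : ∀ i, t i i = 0) :
    ∑ i, ∑ j, G.lapMatrix R i j * t i j = -∑ i, ∑ j, if G.Adj i j then t i j else 0 := by
  simp [SimpleGraph.lapMatrix, SimpleGraph.degMatrix, sub_mul, diagonal_apply, ite_mul, ht,
    SimpleGraph.adjMatrix_apply]

lemma eq_of_connected_of_forall_adj {β : Type*} (hG : G.Connected) {f : V → β}
    (h : ∀ i j, G.Adj i j → f i = f j) (i j : V) : f i = f j := by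
  obtain ⟨w⟩ := hG.preconnected i j
  induction w with
  | nil => rfl
  | cons hadj _ ih => exact (h _ _ hadj).trans ih

end Graphs

section MatrixUnits

variable {m k : Type*} [Fintype m] [Fintype k] [DecidableEq m] [DecidableEq k]

lemma sum_single_mul_mul_conjTranspose (N : Matrix k k ℂ) :
    ∑ a : m, ∑ b : k, single a b (1 : ℂ) * N * (single a b (1 : ℂ))ᴴ
      = N.trace • (1 : Matrix m m ℂ) := by
  simp only [conjTranspose_single, star_one, single_mul_mul_single, one_mul, mul_one]
  ext x y
  simp [Matrix.sum_apply, single_apply, one_apply, trace, Finset.sum_ite_eq', ite_and]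

lemma sum_conjTranspose_single_mul_mul (C : Matrix m m ℂ) :
    ∑ a : m, ∑ b : k, (single a b (1 : ℂ))ᴴ * C * single a b (1 : ℂ)
      = C.trace • (1 : Matrix k k ℂ) := by
  simp only [conjTranspose_single, star_one, single_mul_mul_single, one_mul, mul_one]
  ext x y
  rw [Finset.sum_comm]
  simp [Matrix.sum_apply, single_apply, one_apply, trace, Finset.sum_ite_eq', ite_and]

lemma sum_trace_mul_single_mul_conjTranspose (M : Matrix m m ℂ) (N : Matrix k k ℂ) :
    ∑ a : m, ∑ b : k, (M * (single a b (1 : ℂ) * (N * (single a b (1 : ℂ))ᴴ))).trace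
      = M.trace * N.trace := by
  calc _ = (M * ∑ a : m, ∑ b : k, single a b (1 : ℂ) * N * (single a b (1 : ℂ))ᴴ).trace := by
        simp only [Matrix.mul_sum, trace_sum, Matrix.mul_assoc]
    _ = M.trace * N.trace := by
        rw [sum_single_mul_mul_conjTranspose, Matrix.mul_smul, mul_one, trace_smul, smul_eq_mul,
          mul_comm]

lemma sum_trace_mul_conjTranspose_single_mul {l : Type*} [Fintype l] (D : Matrix l k ℂ)
    (C : Matrix m m ℂ) (F : Matrix k l ℂ) :
    ∑ a : m, ∑ b : k, (D * ((single a b (1 : ℂ))ᴴ * (C * (single a b (1 : ℂ) * F)))).trace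
      = C.trace * (D * F).trace := by
  calc _ = (D * (∑ a : m, ∑ b : k, (single a b (1 : ℂ))ᴴ * C * single a b (1 : ℂ)) * F).trace := by
        simp only [Matrix.mul_sum, Matrix.sum_mul, trace_sum, Matrix.mul_assoc]
    _ = C.trace * (D * F).trace := by
        rw [sum_conjTranspose_single_mul_mul, Matrix.mul_smul, Matrix.mul_one, smul_mul,
          trace_smul, smul_eq_mul]

end MatrixUnits

section Frobenius

variable {m k : Type*} [Fintype m] [Fintype k]

lemma trace_mul_conjTranspose_self_eq_frobSqC (M : Matrix m k ℂ) :
    (M * Mᴴ).trace = frobSqC M := by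
  simp [trace, mul_apply, frobSqC, Complex.mul_conj]

lemma frobSqC_nonneg (M : Matrix m k ℂ) : 0 ≤ frobSqC M :=
  Finset.sum_nonneg fun _ _ => Finset.sum_nonneg fun _ _ => Complex.normSq_nonneg _

lemma normSq_trace_le_card_mul_frobSqC (M : Matrix m m ℂ) :
    Complex.normSq M.trace ≤ Fintype.card m * frobSqC M := by
  calc Complex.normSq M.trace = ‖∑ a, M a a‖ ^ 2 := (Complex.sq_norm _).symm
    _ ≤ (∑ a, ‖M a a‖) ^ 2 := by gcongr; exact norm_sum_le _ _
    _ ≤ Fintype.card m * ∑ a, ‖M a a‖ ^ 2 := sq_sum_le_card_mul_sum_sq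
    _ ≤ Fintype.card m * frobSqC M := by
      gcongr
      refine Finset.sum_le_sum fun a _ => ?_
      rw [Complex.sq_norm]
      exact Finset.single_le_sum (fun b _ => Complex.normSq_nonneg (M a b)) (Finset.mem_univ a)

variable [DecidableEq m] {A B : Matrix m k ℂ}

lemma frobSqC_mul_conjTranspose_le_card (hA : A * Aᴴ = 1) (hB : B * Bᴴ = 1) :
    frobSqC (B * Aᴴ) ≤ Fintype.card m := by
  have hsplit : (B - B * Aᴴ * A) * (B - B * Aᴴ * A)ᴴ = B * Bᴴ - B * Aᴴ * (B * Aᴴ)ᴴ := by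
    have hcancel : ∀ X : Matrix m m ℂ, A * (Aᴴ * X) = X := fun X => by
      rw [← Matrix.mul_assoc, hA, Matrix.one_mul]
    simp only [conjTranspose_sub, conjTranspose_mul, conjTranspose_conjTranspose, Matrix.sub_mul,
      Matrix.mul_sub, Matrix.mul_assoc, hcancel]
    abel
  have hfrob : (frobSqC (B - B * Aᴴ * A) : ℂ) = Fintype.card m - frobSqC (B * Aᴴ) := by
    rw [← trace_mul_conjTranspose_self_eq_frobSqC, hsplit, trace_sub, hB, trace_one,
      trace_mul_conjTranspose_self_eq_frobSqC]
  have hfrob' : frobSqC (B - B * Aᴴ * A) = Fintype.card m - frobSqC (B * Aᴴ) := by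
    exact_mod_cast hfrob
  linarith [frobSqC_nonneg (B - B * Aᴴ * A)]

lemma re_trace_mul_conjTranspose_le_card (hA : A * Aᴴ = 1) (hB : B * Bᴴ = 1) :
    (B * Aᴴ).trace.re ≤ Fintype.card m := by
  have hcs := normSq_trace_le_card_mul_frobSqC (B * Aᴴ)
  rw [Complex.normSq_apply] at hcs
  nlinarith [mul_self_nonneg (B * Aᴴ).trace.im, frobSqC_nonneg (B * Aᴴ),
    frobSqC_mul_conjTranspose_le_card hA hB]

lemma eq_of_re_trace_mul_conjTranspose_eq_card (hA : A * Aᴴ = 1) (hB : B * Bᴴ = 1)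
    (h : (B * Aᴴ).trace.re = Fintype.card m) : A = B := by
  have hexpand : ((A - B) * (A - B)ᴴ).trace
      = 2 * Fintype.card m - (B * Aᴴ).trace - star (B * Aᴴ).trace := by
    rw [← trace_conjTranspose, conjTranspose_mul, conjTranspose_conjTranspose]
    simp only [conjTranspose_sub, Matrix.sub_mul, Matrix.mul_sub, trace_sub, hA, hB, trace_one]
    ring
  have hfrob : frobSqC (A - B) = 0 := by
    have hre := congrArg Complex.re hexpand
    rw [trace_mul_conjTranspose_self_eq_frobSqC, Complex.ofReal_re] at hre
    simp only [hre, h, Complex.sub_re, Complex.mul_re, Complex.re_ofNat, Complex.natCast_re,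
      Complex.im_ofNat, Complex.natCast_im, Complex.star_def, Complex.conj_re]
    ring
  rw [← sub_eq_zero, ← trace_mul_conjTranspose_self_eq_zero_iff,
    trace_mul_conjTranspose_self_eq_frobSqC, hfrob, Complex.ofReal_zero]

end Frobenius

section TangentProbe

variable {m k : Type*} [Fintype m] [Fintype k] [DecidableEq m]

noncomputable def tangentProbe (A Q : Matrix m k ℂ) : Matrix m k ℂ :=
  (2 : ℂ) • Q - (Q * Aᴴ + A * Qᴴ) * A

noncomputable def edgeForm (A B Q : Matrix m k ℂ) : ℂ :=
  (B * Aᴴ * (tangentProbe A Q * (tangentProbe A Q)ᴴ)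
    - tangentProbe B Q * (tangentProbe A Q)ᴴ).trace

noncomputable def edgeFormSum [DecidableEq k] (A B : Matrix m k ℂ) : ℂ :=
  ∑ a : m, ∑ b : k, (edgeForm A B (single a b 1) + edgeForm A B (Complex.I • single a b 1))

variable {A : Matrix m k ℂ}

lemma tangentProbe_mul_conjTranspose_add (hA : A * Aᴴ = 1) (Q : Matrix m k ℂ) :
    tangentProbe A Q * Aᴴ + A * (tangentProbe A Q)ᴴ = 0 := by
  have hcancel : ∀ X : Matrix m m ℂ, A * (Aᴴ * X) = X := fun X => by
    rw [← Matrix.mul_assoc, hA, Matrix.one_mul]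
  simp only [tangentProbe, Matrix.sub_mul, Matrix.mul_sub, Matrix.add_mul, Matrix.mul_add,
    conjTranspose_sub, conjTranspose_add, conjTranspose_smul, conjTranspose_mul,
    conjTranspose_conjTranspose, Matrix.smul_mul, Matrix.mul_smul, Matrix.mul_assoc, hA,
    hcancel, Matrix.mul_one, Complex.star_def, Complex.conj_ofNat]
  module

/- Pairing `Q` with `i Q` cancels the terms of `edgeForm A B Q` that are bilinear rather than
sesquilinear in `Q`; the survivors are written in the two shapes `tr (M Q N Qᴴ)` and
`tr (D Qᴴ C Q F)` that the matrix-unit sums above evaluate. -/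
lemma edgeForm_add_edgeForm_I_smul [DecidableEq k] (hA : A * Aᴴ = 1) (B Q : Matrix m k ℂ) :
    edgeForm A B Q + edgeForm A B (Complex.I • Q) =
      8 * (B * Aᴴ * (Q * ((1 : Matrix k k ℂ) * Qᴴ))).trace
      - 6 * (B * Aᴴ * (Q * (Aᴴ * A * Qᴴ))).trace
      + 2 * (B * Aᴴ * A * (Qᴴ * ((1 : Matrix m m ℂ) * (Q * Aᴴ)))).trace
      - 8 * ((1 : Matrix m m ℂ) * (Q * ((1 : Matrix k k ℂ) * Qᴴ))).trace
      + 4 * ((1 : Matrix m m ℂ) * (Q * (Aᴴ * A * Qᴴ))).trace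
      + 4 * ((1 : Matrix m m ℂ) * (Q * (Bᴴ * B * Qᴴ))).trace
      - 2 * ((1 : Matrix m m ℂ) * (Q * (Bᴴ * B * (Aᴴ * A) * Qᴴ))).trace
      - 2 * (B * (Qᴴ * (B * Aᴴ * (Q * Aᴴ)))).trace := by
  have hcancel : ∀ X : Matrix m m ℂ, A * (Aᴴ * X) = X := fun X => by
    rw [← Matrix.mul_assoc, hA, Matrix.one_mul]
  simp only [edgeForm, tangentProbe, Matrix.sub_mul, Matrix.mul_sub, Matrix.add_mul,
    Matrix.mul_add, conjTranspose_sub, conjTranspose_add, conjTranspose_smul,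
    conjTranspose_mul, conjTranspose_conjTranspose, Matrix.smul_mul, Matrix.mul_smul,
    Matrix.mul_assoc, hcancel, Matrix.one_mul, trace_sub, trace_add, trace_smul, smul_smul,
    smul_eq_mul, smul_sub, smul_add, star_mul', star_ofNat, Complex.star_def, Complex.conj_I,
    map_neg, neg_neg]
  ring_nf
  simp only [Complex.I_sq]
  ring

variable [DecidableEq k] {B : Matrix m k ℂ}

lemma edgeFormSum_eq (hA : A * Aᴴ = 1) (hB : B * Bᴴ = 1) :
    edgeFormSum A B
      = (8 * Fintype.card k - 4 * Fintype.card m) * (B * Aᴴ).trace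
        - 8 * Fintype.card k * Fintype.card m + 8 * Fintype.card m ^ 2
        - 2 * Fintype.card m * (B * Aᴴ * (B * Aᴴ)ᴴ).trace - 2 * (B * Aᴴ).trace ^ 2 := by
  have htrA : (Aᴴ * A).trace = Fintype.card m := by rw [trace_mul_comm, hA, trace_one]
  have htrB : (Bᴴ * B).trace = Fintype.card m := by rw [trace_mul_comm, hB, trace_one]
  have hc : (B * Aᴴ * A * Aᴴ).trace = (B * Aᴴ).trace := by
    rw [Matrix.mul_assoc, hA, Matrix.mul_one]
  have ht : (Bᴴ * B * (Aᴴ * A)).trace = (B * Aᴴ * (B * Aᴴ)ᴴ).trace := by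
    rw [Matrix.mul_assoc, trace_mul_comm]
    simp only [conjTranspose_mul, conjTranspose_conjTranspose, Matrix.mul_assoc]
  simp only [edgeFormSum, edgeForm_add_edgeForm_I_smul hA, Finset.sum_add_distrib,
    Finset.sum_sub_distrib, ← Finset.mul_sum, sum_trace_mul_single_mul_conjTranspose,
    sum_trace_mul_conjTranspose_single_mul, trace_one, htrA, htrB, hc, ht]
  ring

lemma re_edgeFormSum_le (hA : A * Aᴴ = 1) (hB : B * Bᴴ = 1) :
    (edgeFormSum A B).re ≤ -4 * ((Fintype.card m - (B * Aᴴ).trace.re)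
      * (2 * Fintype.card k - 2 * Fintype.card m - (B * Aᴴ).trace.re)) := by
  have hcs := normSq_trace_le_card_mul_frobSqC (B * Aᴴ)
  rw [Complex.normSq_apply] at hcs
  rw [edgeFormSum_eq hA hB, trace_mul_conjTranspose_self_eq_frobSqC]
  simp only [sq, Complex.sub_re, Complex.add_re, Complex.mul_re, Complex.re_ofNat,
    Complex.natCast_re, Complex.im_ofNat, Complex.natCast_im, Complex.sub_im, Complex.mul_im,
    Complex.ofReal_re, Complex.ofReal_im]
  nlinarith

lemma re_edgeFormSum_nonpos (hA : A * Aᴴ = 1) (hB : B * Bᴴ = 1)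
    (hp : 3 * Fintype.card m ≤ 2 * Fintype.card k) : (edgeFormSum A B).re ≤ 0 := by
  have hs := re_trace_mul_conjTranspose_le_card hA hB
  have hp' : (3 * Fintype.card m : ℝ) ≤ 2 * Fintype.card k := by exact_mod_cast hp
  nlinarith [re_edgeFormSum_le hA hB]

lemma eq_of_re_edgeFormSum_eq_zero (hA : A * Aᴴ = 1) (hB : B * Bᴴ = 1)
    (hp : 3 * Fintype.card m ≤ 2 * Fintype.card k) (h : (edgeFormSum A B).re = 0) : A = B := by
  have hs := re_trace_mul_conjTranspose_le_card hA hB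
  have hp' : (3 * Fintype.card m : ℝ) ≤ 2 * Fintype.card k := by exact_mod_cast hp
  have hle := re_edgeFormSum_le hA hB
  rw [h] at hle
  exact eq_of_re_trace_mul_conjTranspose_eq_card hA hB (by nlinarith)

lemma sum_adj_re_edgeFormSum_nonneg {V : Type*} [Fintype V] (G : SimpleGraph V)
    [DecidableRel G.Adj] {X : V → Matrix m k ℂ}
    (h : ∀ Q, 0 ≤ ∑ i, ∑ j, if G.Adj i j then (edgeForm (X i) (X j) Q).re else 0) :
    0 ≤ ∑ i, ∑ j, if G.Adj i j then (edgeFormSum (X i) (X j)).re else 0 := by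
  have hsplit : ∀ i j, (if G.Adj i j then (edgeFormSum (X i) (X j)).re else 0)
      = ∑ a : m, ∑ b : k,
        ((if G.Adj i j then (edgeForm (X i) (X j) (single a b 1)).re else 0)
          + if G.Adj i j then (edgeForm (X i) (X j) (Complex.I • single a b 1)).re else 0) :=
    fun i j => by split_ifs <;> simp [edgeFormSum, Complex.re_sum]
  have hall := Finset.sum_nonneg (s := .univ) fun (a : m) _ =>
    Finset.sum_nonneg (s := .univ) fun (b : k) _ =>
      add_nonneg (h (single a b 1)) (h (Complex.I • single a b 1))
  simp only [← Finset.sum_add_distrib] at hall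
  simp only [Finset.sum_comm (s := (Finset.univ : Finset m))] at hall
  simp only [Finset.sum_comm (s := (Finset.univ : Finset k))] at hall
  simpa only [hsplit] using hall

end TangentProbe

section CriticalPoints

variable {n r p : ℕ} {Zb : Fin n → Matrix (Fin r) (Fin r) ℂ}

lemma exists_eq_ofRowBlocks_mul {Y : Matrix (Fin n × Fin r) (Fin p) ℂ} (hY : FeasibleC Y)
    (hZb : ∀ i, Zb i * (Zb i)ᴴ = 1) :
    ∃ X : Fin n → Matrix (Fin r) (Fin p) ℂ,
      (∀ i, X i * (X i)ᴴ = 1) ∧ Y = ofRowBlocks fun i => Zb i * X i := by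
  refine ⟨fun i => (Zb i)ᴴ * blk Y i, fun i => ?_, ?_⟩
  · rw [conjTranspose_mul, conjTranspose_conjTranspose, Matrix.mul_assoc,
      ← Matrix.mul_assoc (blk Y i), hY i, Matrix.one_mul, mul_eq_one_comm.mp (hZb i)]
  · conv_lhs => rw [← ofRowBlocks_blk Y]
    simp only [← Matrix.mul_assoc, hZb, Matrix.one_mul]

variable {X : Fin n → Matrix (Fin r) (Fin p) ℂ}

lemma tangentProbe_isTangent (hX : ∀ i, X i * (X i)ᴴ = 1) (Q : Matrix (Fin r) (Fin p) ℂ)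
    (i : Fin n) :
    blk (ofRowBlocks fun i => Zb i * tangentProbe (X i) Q) i
        * (blk (ofRowBlocks fun i => Zb i * X i) i)ᴴ
      + blk (ofRowBlocks fun i => Zb i * X i) i
        * (blk (ofRowBlocks fun i => Zb i * tangentProbe (X i) Q) i)ᴴ = 0 := by
  have hfactor : ∀ U W : Matrix (Fin r) (Fin p) ℂ,
      Zb i * U * (Zb i * W)ᴴ + Zb i * W * (Zb i * U)ᴴ = Zb i * (U * Wᴴ + W * Uᴴ) * (Zb i)ᴴ :=
    fun U W => by simp only [conjTranspose_mul, Matrix.mul_add, Matrix.add_mul, Matrix.mul_assoc]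
  rw [blk_ofRowBlocks, blk_ofRowBlocks, hfactor, tangentProbe_mul_conjTranspose_add (hX i),
    Matrix.mul_zero, Matrix.zero_mul]

lemma re_trace_SmatC_mul_tangentProbe (G : SimpleGraph (Fin n)) [DecidableRel G.Adj]
    (hZb : ∀ i, (Zb i)ᴴ * Zb i = 1) (hX : ∀ i, X i * (X i)ᴴ = 1)
    (Q : Matrix (Fin r) (Fin p) ℂ) :
    (SmatC (LZmatC (G.lapMatrix ℂ) Zb) (ofRowBlocks fun i => Zb i * X i)
        * ofRowBlocks (fun i => Zb i * tangentProbe (X i) Q)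
        * (ofRowBlocks fun i => Zb i * tangentProbe (X i) Q)ᴴ).trace.re
      = ∑ i, ∑ j, if G.Adj i j then (edgeForm (X i) (X j) Q).re else 0 := by
  rw [re_trace_SmatC_LZmatC_mul _ hZb]
  simp only [← Complex.re_sum]
  rw [sum_lapMatrix_mul_of_diag_eq_zero]
  · simp only [Complex.neg_re, Complex.re_sum, ← Finset.sum_neg_distrib, edgeForm]
    refine Finset.sum_congr rfl fun i _ => Finset.sum_congr rfl fun j _ => ?_
    split_ifs
    · rw [← Complex.neg_re, ← trace_neg, neg_sub]
    · simp
  · intro i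
    rw [hX, Matrix.one_mul, sub_self, trace_zero]

lemma eq_of_adj_of_isSecondOrderCritical (hp : 3 * r ≤ 2 * p) (G : SimpleGraph (Fin n))
    [DecidableRel G.Adj] (hZb : ∀ i, (Zb i)ᴴ * Zb i = 1) (hX : ∀ i, X i * (X i)ᴴ = 1)
    (hY : IsSecondOrderCriticalC (LZmatC (G.lapMatrix ℂ) Zb) (ofRowBlocks fun i => Zb i * X i))
    {i j : Fin n} (hij : G.Adj i j) : X i = X j := by
  have hp' : 3 * Fintype.card (Fin r) ≤ 2 * Fintype.card (Fin p) := by simpa using hp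
  have hprobe : ∀ Q, 0 ≤ ∑ i, ∑ j, if G.Adj i j then (edgeForm (X i) (X j) Q).re else 0 :=
    fun Q => re_trace_SmatC_mul_tangentProbe G hZb hX Q ▸ hY.2.2 _ (tangentProbe_isTangent hX Q)
  have hT : ∀ i j, (if G.Adj i j then (edgeFormSum (X i) (X j)).re else 0) ≤ 0 := fun i j => by
    split_ifs
    · exact re_edgeFormSum_nonpos (hX i) (hX j) hp'
    · rfl
  have hsum := sum_adj_re_edgeFormSum_nonneg G hprobe
  have hrow := (Finset.sum_eq_zero_iff_of_nonpos fun i _ => Finset.sum_nonpos fun j _ => hT i j).1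
    (le_antisymm (Finset.sum_nonpos fun i _ => Finset.sum_nonpos fun j _ => hT i j) hsum) i
    (Finset.mem_univ _)
  have hij' := (Finset.sum_eq_zero_iff_of_nonpos fun j _ => hT i j).1 hrow j (Finset.mem_univ _)
  rw [if_pos hij] at hij'
  exact eq_of_re_edgeFormSum_eq_zero (hX i) (hX j) hp' hij'

end CriticalPoints

theorem complex_noiseless_landscape_general
    (n r p : ℕ) (hp : 3 * r ≤ 2 * p)
    (G : SimpleGraph (Fin n)) [DecidableRel G.Adj] (hG : G.Connected)
    (Zb : Fin n → Matrix (Fin r) (Fin r) ℂ) (hZb : ∀ i, Zb i * (Zb i)ᴴ = 1)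
    (Lhat : Matrix (Fin n × Fin r) (Fin n × Fin r) ℂ)
    (hLhat : Lhat = LZmatC (G.lapMatrix ℂ) Zb)
    (Y : Matrix (Fin n × Fin r) (Fin p) ℂ)
    (hY : IsSecondOrderCriticalC Lhat Y) :
    Y * Yᴴ = ZstackC Zb * (ZstackC Zb)ᴴ := by
  subst hLhat
  obtain ⟨X, hX, rfl⟩ := exists_eq_ofRowBlocks_mul hY.1 hZb
  have hXeq : ∀ i j, X i = X j := eq_of_connected_of_forall_adj hG fun _ _ =>
    eq_of_adj_of_isSecondOrderCritical hp G (fun i => mul_eq_one_comm.mp (hZb i)) hX hY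
  change _ = ofRowBlocks Zb * (ofRowBlocks Zb)ᴴ
  simp only [ofRowBlocks_mul_conjTranspose, conjTranspose_mul, Matrix.mul_assoc]
  congr! 3 with i j
  rw [← Matrix.mul_assoc (X i), hXeq i j, hX, Matrix.one_mul]

/-- **Theorem 1.5 (complex/unitary case, noiseless).**  If `G` is connected, the measurements are
exact (`L̂ = L_Z`), and `2p ≥ 3r`, then every second-order critical point `Y` of the complex
rank-`p` problem satisfies `Y Y* = Z Z*`. -/
theorem complex_noiseless_landscape
    (n r p : ℕ) (hn : 1 ≤ n) (hr : 1 ≤ r) (hrp : r ≤ p) (hp : 3 * r ≤ 2 * p)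
    (G : SimpleGraph (Fin n)) [DecidableRel G.Adj] (hG : G.Connected)
    (Zb : Fin n → Matrix (Fin r) (Fin r) ℂ) (hZb : ∀ i, Zb i * (Zb i)ᴴ = 1)
    (Lhat : Matrix (Fin n × Fin r) (Fin n × Fin r) ℂ)
    (hLhat : Lhat = LZmatC (G.lapMatrix ℂ) Zb)
    (Y : Matrix (Fin n × Fin r) (Fin p) ℂ)
    (hY : IsSecondOrderCriticalC Lhat Y) :
    Y * Yᴴ = ZstackC Zb * (ZstackC Zb)ᴴ :=
  complex_noiseless_landscape_general n r p hp G hG Zb hZb Lhat hLhat Y hY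

end SyncPaper
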